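/- Let (V, ν, τ, τ*) be a PN space with τ, τ* sup-continuous and W a closed subspace, and suppose both W (with the restricted norm) and V/W (with the quotient norm ν̄) are strongly complete. Then V is strongly complete. -/

import Mathlib

/-!
A strongly Cauchy sequence `p` in `V` projects to a Cauchy sequence in `V ⧸ W`, which converges
to some class `x + W`. Since `ν̄` is a supremum over `W`, along a subsequence one finds `q k ∈ W`
with `p (φ k) + q k → x`. Then `q k = (p (φ k) + q k) - p (φ k)` is Cauchy in `W`, hence tends to
some `w ∈ W`, so `p (φ k) → x - w`, and a Cauchy sequence with a convergent subsequence converges.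
The limit arithmetic rests on the triangle inequality `τ (ν p) (ν q) ≤ ν (p + q)`, made
quantitative by the continuity of `τ` at `(ε₀, ε₀)`.
-/

open Filter Topology Set

/-- A distribution function in `Δ⁺`: nondecreasing, left-continuous,
vanishing on `(-∞,0]` and bounded by `1`. -/
structure DistFun where
  toFun : ℝ → ℝ
  mono' : Monotone toFun
  leftCont' : ∀ x, Filter.Tendsto toFun (nhdsWithin x (Set.Iio x)) (nhds (toFun x))
  zero' : ∀ x ≤ (0 : ℝ), toFun x = 0
  le_one' : ∀ x, toFun x ≤ 1

instance : CoeFun DistFun (fun _ => ℝ → ℝ) := ⟨DistFun.toFun⟩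

/-- Pointwise order on `Δ⁺`. -/
instance : LE DistFun := ⟨fun F G => ∀ x, F.toFun x ≤ G.toFun x⟩

/-- The unit step distribution function `ε_a` for `a ≥ 0`. -/
noncomputable def unitStep (a : ℝ) (_ha : 0 ≤ a) : DistFun where
  toFun x := if x ≤ a then 0 else 1
  mono' := by
    intro x y hxy
    by_cases hx : x ≤ a <;> by_cases hy : y ≤ a <;> simp [hx, hy] <;> linarith
  leftCont' := by
    intro x
    by_cases hx : x ≤ a
    · have h : (fun y => if y ≤ a then (0:ℝ) else 1) =ᶠ[nhdsWithin x (Set.Iio x)]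
          fun _ => (0:ℝ) := by
        filter_upwards [self_mem_nhdsWithin] with y hy
        exact if_pos ((le_of_lt hy).trans hx)
      simpa [if_pos hx] using (tendsto_const_nhds (α := ℝ)).congr' h.symm
    · have hax : a < x := not_le.mp hx
      have h : (fun y => if y ≤ a then (0:ℝ) else 1) =ᶠ[nhdsWithin x (Set.Iio x)]
          fun _ => (1:ℝ) := by
        filter_upwards [(eventually_gt_nhds hax).filter_mono nhdsWithin_le_nhds] with y hy
        exact if_neg (not_le.mpr hy)
      simpa [if_neg hx] using (tendsto_const_nhds (α := ℝ)).congr' h.symm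
  zero' := fun x hx => if_pos (hx.trans _ha)
  le_one' := by intro x; by_cases h : x ≤ a <;> simp [h]

/-- The maximal element `ε₀` of `Δ⁺`. -/
noncomputable def eps0 : DistFun := unitStep 0 le_rfl

/-- The one-sided Lévy condition `(F,G;h)`. -/
def levyCond (F G : DistFun) (h : ℝ) : Prop :=
  ∀ x : ℝ, -(1/h) < x → x < 1/h →
    F.toFun (x - h) - h ≤ G.toFun x ∧ G.toFun x ≤ F.toFun (x + h) + h

/-- The Sibley (modified Lévy) metric on `Δ⁺`. -/
noncomputable def sibley (F G : DistFun) : ℝ :=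
  sInf {h : ℝ | 0 < h ∧ h ≤ 1 ∧ levyCond F G h ∧ levyCond G F h}

/-- Triangle function: associative, commutative, nondecreasing binary
operation on `Δ⁺` with identity `ε₀`. -/
structure IsTriangleFun (τ : DistFun → DistFun → DistFun) : Prop where
  comm : ∀ F G, τ F G = τ G F
  assoc : ∀ F G H, τ (τ F G) H = τ F (τ G H)
  mono : ∀ F G H, F ≤ G → τ F H ≤ τ G H
  ident : ∀ F, τ F eps0 = F

/-- Continuity of a triangle function w.r.t. the Sibley metric (sequential form). -/
def TriCont (τ : DistFun → DistFun → DistFun) : Prop :=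
  ∀ (F G : ℕ → DistFun) (F₀ G₀ : DistFun),
    Filter.Tendsto (fun n => sibley (F n) F₀) Filter.atTop (nhds 0) →
    Filter.Tendsto (fun n => sibley (G n) G₀) Filter.atTop (nhds 0) →
    Filter.Tendsto (fun n => sibley (τ (F n) (G n)) (τ F₀ G₀)) Filter.atTop (nhds 0)

/-- Sup-continuity of a triangle function: `τ (sup_i F_i) G = sup_i τ (F_i) G`
(pointwise). -/
def SupCont (τ : DistFun → DistFun → DistFun) : Prop :=
  ∀ {ι : Type} [Nonempty ι] (F : ι → DistFun) (S G : DistFun),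
    (∀ x, S.toFun x = ⨆ i, (F i).toFun x) →
    ∀ x, (τ S G).toFun x = ⨆ i, (τ (F i) G).toFun x

/-- Domination `τ₁ ≫ τ₂` of triangle functions. -/
def Dominates (τ₁ τ₂ : DistFun → DistFun → DistFun) : Prop :=
  ∀ F₁ F₂ G₁ G₂, τ₂ (τ₁ F₁ F₂) (τ₁ G₁ G₂) ≤ τ₁ (τ₂ F₁ G₁) (τ₂ F₂ G₂)

/-- A probabilistic pseudo-normed space `(V, ν, τ, τ*)`. -/
structure IsPPNSpace {V : Type*} [AddCommGroup V] [Module ℝ V]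
    (ν : V → DistFun) (τ τs : DistFun → DistFun → DistFun) : Prop where
  tri : IsTriangleFun τ
  tri_s : IsTriangleFun τs
  cont : TriCont τ
  cont_s : TriCont τs
  tau_le : ∀ F G, τ F G ≤ τs F G
  N1' : ν 0 = eps0
  N2 : ∀ p, ν (-p) = ν p
  N3 : ∀ p q, τ (ν p) (ν q) ≤ ν (p + q)
  N4 : ∀ (p : V) (α : ℝ), 0 ≤ α → α ≤ 1 →
    ν p ≤ τs (ν (α • p)) (ν ((1 - α) • p))

/-- A probabilistic normed space `(V, ν, τ, τ*)`. -/
structure IsPNSpace {V : Type*} [AddCommGroup V] [Module ℝ V]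
    (ν : V → DistFun) (τ τs : DistFun → DistFun → DistFun)
    extends IsPPNSpace ν τ τs : Prop where
  N1 : ∀ p, ν p = eps0 ↔ p = 0

/-- The strong topology of a PN space, generated by the strong neighbourhoods
`N_p(t) = {q : ν_{q-p}(t) > 1 - t}`. -/
def strongTop {V : Type*} [AddCommGroup V] (ν : V → DistFun) : TopologicalSpace V :=
  TopologicalSpace.generateFrom
    {S | ∃ (p : V) (t : ℝ), 0 < t ∧ S = {q | 1 - t < (ν (q - p)).toFun t}}

/-- A set is closed in the strong topology. -/
def StrongClosed {V : Type*} [AddCommGroup V] (ν : V → DistFun) (S : Set V) : Prop :=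
  @IsClosed V (strongTop ν) S

/-- A strong Cauchy sequence. -/
def StrongCauchy {V : Type*} [AddCommGroup V] (ν : V → DistFun) (p : ℕ → V) : Prop :=
  ∀ t : ℝ, 0 < t → ∃ N : ℕ, ∀ m n, N ≤ m → N ≤ n → 1 - t < (ν (p n - p m)).toFun t

/-- Strong convergence of a sequence to a point. -/
def StrongConv {V : Type*} [AddCommGroup V] (ν : V → DistFun) (p : ℕ → V) (x : V) : Prop :=
  ∀ t : ℝ, 0 < t → ∃ N : ℕ, ∀ n, N ≤ n → 1 - t < (ν (p n - x)).toFun t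

/-- Strong completeness. -/
def StrongComplete {V : Type*} [AddCommGroup V] (ν : V → DistFun) : Prop :=
  ∀ p : ℕ → V, StrongCauchy ν p → ∃ x, StrongConv ν p x

namespace DistFun

/-- `F.Near t` says that `F` lies in the strong neighbourhood of `ε₀` of radius `t`, so that
`q ∈ N_p(t)` reads `(ν (q - p)).Near t`. -/
def Near (F : DistFun) (t : ℝ) : Prop := 1 - t < F.toFun t

lemma nonneg (F : DistFun) (x : ℝ) : 0 ≤ F.toFun x := by
  rcases le_or_gt x 0 with hx | hx
  · exact (F.zero' x hx).ge
  · simpa [F.zero' 0 le_rfl] using F.mono' hx.le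

lemma near_of_one_lt (F : DistFun) {t : ℝ} (ht : 1 < t) : F.Near t :=
  (sub_neg.2 ht).trans_le (F.nonneg t)

lemma Near.pos {F : DistFun} {t : ℝ} (hF : F.Near t) : 0 < t := by
  by_contra! ht
  have : 1 - t < 0 := F.zero' t ht ▸ hF
  linarith

lemma Near.mono {F : DistFun} {s t : ℝ} (hF : F.Near s) (hst : s ≤ t) : F.Near t := by
  have : 1 - s < F.toFun s := hF
  have := F.mono' hst
  show 1 - t < F.toFun t
  linarith

lemma Near.of_le {F G : DistFun} {t : ℝ} (hF : F.Near t) (hFG : F ≤ G) : G.Near t :=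
  hF.trans_le (hFG t)

end DistFun

open DistFun

lemma eps0_apply (x : ℝ) : eps0.toFun x = if x ≤ 0 then 0 else 1 := rfl

lemma levyCond_eps0_left {F : DistFun} {s : ℝ} (hF : F.Near s) : levyCond eps0 F s := by
  have hFs : 1 - s < F.toFun s := hF
  have hs := hF.pos
  intro x _ _
  have := F.nonneg x
  have := F.le_one' x
  constructor <;> rw [eps0_apply] <;> split_ifs with hx
  · linarith
  · linarith [F.mono' (show s ≤ x by linarith)]
  · linarith [F.zero' x (by linarith)]
  · linarith

lemma levyCond_eps0_right {F : DistFun} {s : ℝ} (hF : F.Near s) : levyCond F eps0 s := by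
  have hFs : 1 - s < F.toFun s := hF
  have hs := hF.pos
  intro x _ _
  have := F.nonneg (x + s)
  constructor <;> rw [eps0_apply] <;> split_ifs with hx
  · linarith [F.zero' (x - s) (by linarith)]
  · linarith [F.le_one' (x - s)]
  · linarith
  · linarith [F.mono' (show s ≤ x + s by linarith)]

lemma levyCond_one (F G : DistFun) : levyCond F G 1 := fun x _ _ =>
  ⟨by linarith [F.le_one' (x - 1), G.nonneg x], by linarith [G.le_one' x, F.nonneg (x + 1)]⟩

lemma sibley_nonneg (F G : DistFun) : 0 ≤ sibley F G :=
  Real.sInf_nonneg fun _ hh => hh.1.le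

lemma sibley_eps0_le {F : DistFun} {s : ℝ} (hF : F.Near s) (hs1 : s ≤ 1) :
    sibley F eps0 ≤ s :=
  csInf_le ⟨0, fun _ hh => hh.1.le⟩
    ⟨hF.pos, hs1, levyCond_eps0_right hF, levyCond_eps0_left hF⟩

lemma near_of_sibley_eps0_lt {F : DistFun} {t : ℝ} (ht1 : t ≤ 1) (hd : sibley F eps0 < t) :
    F.Near t := by
  obtain ⟨r, ⟨hr, -, -, hlevy⟩, hrt⟩ := exists_lt_of_csInf_lt
    (by exact ⟨1, one_pos, le_rfl, levyCond_one F eps0, levyCond_one eps0 F⟩) hd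
  have ht_lt : t < 1 / r := by rw [lt_div_iff₀ hr]; nlinarith
  have := (hlevy t (by linarith [one_div_pos.2 hr]) ht_lt).1
  rw [eps0_apply, if_neg (by linarith)] at this
  show 1 - t < F.toFun t
  linarith

lemma tendsto_sibley_eps0 {F : ℕ → DistFun} {s : ℕ → ℝ} (hF : ∀ n, (F n).Near (s n))
    (hs1 : ∀ n, s n ≤ 1) (hs : Tendsto s atTop (𝓝 0)) :
    Tendsto (fun n => sibley (F n) eps0) atTop (𝓝 0) :=
  tendsto_of_tendsto_of_tendsto_of_le_of_le tendsto_const_nhds hs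
    (fun _ => sibley_nonneg _ _) (fun n => sibley_eps0_le (hF n) (hs1 n))

lemma TriCont.exists_near_of_near {τ : DistFun → DistFun → DistFun} (hc : TriCont τ)
    (hid : τ eps0 eps0 = eps0) {t : ℝ} (ht : 0 < t) :
    ∃ s, 0 < s ∧ ∀ F G : DistFun, F.Near s → G.Near s → (τ F G).Near t := by
  rcases lt_or_ge 1 t with ht1 | ht1
  · exact ⟨1, one_pos, fun F G _ _ => (τ F G).near_of_one_lt ht1⟩
  by_contra! hcon
  choose F G hF hG hFG using fun n : ℕ => hcon (1 / (n + 1)) Nat.one_div_pos_of_nat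
  have hs_le (n : ℕ) : 1 / ((n : ℝ) + 1) ≤ 1 := by
    simpa using Nat.one_div_le_one_div (α := ℝ) n.zero_le
  have hs := tendsto_one_div_add_atTop_nhds_zero_nat (𝕜 := ℝ)
  have hsib := hc F G eps0 eps0 (tendsto_sibley_eps0 hF hs_le hs) (tendsto_sibley_eps0 hG hs_le hs)
  rw [hid] at hsib
  obtain ⟨n, hn⟩ := (hsib.eventually (eventually_lt_nhds ht)).exists
  exact hFG n (near_of_sibley_eps0_lt ht1 hn)

section PPNSpace

variable {V : Type*} [AddCommGroup V] [Module ℝ V] {ν : V → DistFun}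
  {τ τs : DistFun → DistFun → DistFun} {p q : ℕ → V}

lemma IsPPNSpace.exists_near_add (h : IsPPNSpace ν τ τs) {t : ℝ} (ht : 0 < t) :
    ∃ s, 0 < s ∧ ∀ a b : V, (ν a).Near s → (ν b).Near s → (ν (a + b)).Near t := by
  obtain ⟨s, hs, hτ⟩ := h.cont.exists_near_of_near (h.tri.ident eps0) ht
  exact ⟨s, hs, fun a b ha hb => (hτ _ _ ha hb).of_le (h.N3 a b)⟩

lemma IsPPNSpace.exists_near_sub (h : IsPPNSpace ν τ τs) {t : ℝ} (ht : 0 < t) :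
    ∃ s, 0 < s ∧ ∀ a b : V, (ν a).Near s → (ν b).Near s → (ν (a - b)).Near t := by
  obtain ⟨s, hs, hadd⟩ := h.exists_near_add ht
  refine ⟨s, hs, fun a b ha hb => ?_⟩
  rw [sub_eq_add_neg]
  exact hadd a (-b) ha (h.N2 b ▸ hb)

lemma StrongConv.sub (h : IsPPNSpace ν τ τs) {a b : V} (hp : StrongConv ν p a)
    (hq : StrongConv ν q b) : StrongConv ν (fun n => p n - q n) (a - b) := by
  intro t ht
  obtain ⟨s, hs, hsub⟩ := h.exists_near_sub ht
  obtain ⟨N₁, hN₁⟩ := hp s hs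
  obtain ⟨N₂, hN₂⟩ := hq s hs
  refine ⟨max N₁ N₂, fun n hn => ?_⟩
  rw [sub_sub_sub_comm]
  exact hsub _ _ (hN₁ n (le_of_max_le_left hn)) (hN₂ n (le_of_max_le_right hn))

lemma StrongCauchy.sub (h : IsPPNSpace ν τ τs) (hp : StrongCauchy ν p) (hq : StrongCauchy ν q) :
    StrongCauchy ν (fun n => p n - q n) := by
  intro t ht
  obtain ⟨s, hs, hsub⟩ := h.exists_near_sub ht
  obtain ⟨N₁, hN₁⟩ := hp s hs
  obtain ⟨N₂, hN₂⟩ := hq s hs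
  refine ⟨max N₁ N₂, fun m n hm hn => ?_⟩
  rw [sub_sub_sub_comm]
  exact hsub _ _ (hN₁ m n (le_of_max_le_left hm) (le_of_max_le_left hn))
    (hN₂ m n (le_of_max_le_right hm) (le_of_max_le_right hn))

lemma StrongConv.strongCauchy (h : IsPPNSpace ν τ τs) {a : V} (hp : StrongConv ν p a) :
    StrongCauchy ν p := by
  intro t ht
  obtain ⟨s, hs, hsub⟩ := h.exists_near_sub ht
  obtain ⟨N, hN⟩ := hp s hs
  refine ⟨N, fun m n hm hn => ?_⟩
  rw [← sub_sub_sub_cancel_right (p n) (p m) a]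
  exact hsub _ _ (hN n hn) (hN m hm)

lemma StrongCauchy.strongConv_of_comp (h : IsPPNSpace ν τ τs) (hp : StrongCauchy ν p)
    {φ : ℕ → ℕ} (hφ : Tendsto φ atTop atTop) {a : V} (hpφ : StrongConv ν (fun k => p (φ k)) a) :
    StrongConv ν p a := by
  intro t ht
  obtain ⟨s, hs, hadd⟩ := h.exists_near_add ht
  obtain ⟨N, hN⟩ := hp s hs
  obtain ⟨K, hK⟩ := hpφ s hs
  obtain ⟨k, hkN, hkK⟩ := ((hφ.eventually_ge_atTop N).and (eventually_ge_atTop K)).exists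
  refine ⟨N, fun n hn => ?_⟩
  rw [← sub_add_sub_cancel (p n) (p (φ k)) a]
  exact hadd _ _ (hN _ _ hkN hn) (hK k hkK)

end PPNSpace

lemma StrongCauchy.comp {V : Type*} [AddCommGroup V] {ν : V → DistFun} {p : ℕ → V}
    (hp : StrongCauchy ν p) {φ : ℕ → ℕ} (hφ : Tendsto φ atTop atTop) :
    StrongCauchy ν (fun k => p (φ k)) := by
  intro t ht
  obtain ⟨N, hN⟩ := hp t ht
  obtain ⟨K, hK⟩ := eventually_atTop.1 (hφ.eventually_ge_atTop N)
  exact ⟨K, fun m n hm hn => hN _ _ (hK m hm) (hK n hn)⟩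

section Submodule

variable {V : Type*} [AddCommGroup V] [Module ℝ V] {ν : V → DistFun} {W : Submodule ℝ V}

lemma strongCauchy_submodule_iff {q : ℕ → W} :
    StrongCauchy (fun w : W => ν w) q ↔ StrongCauchy ν (fun n => (q n : V)) := by
  simp only [StrongCauchy, Submodule.coe_sub]

lemma strongConv_submodule_iff {q : ℕ → W} {w : W} :
    StrongConv (fun w : W => ν w) q w ↔ StrongConv ν (fun n => (q n : V)) w := by
  simp only [StrongConv, Submodule.coe_sub]

/-- `ν'` is the quotient norm `ν̄_{p+W} = sup_{q ∈ W} ν_{p+q}` induced by `ν` on `V ⧸ W`. -/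
def IsQuotientNorm (ν : V → DistFun) (W : Submodule ℝ V) (ν' : V ⧸ W → DistFun) : Prop :=
  ∀ (p : V) (x : ℝ), (ν' (W.mkQ p)).toFun x = ⨆ q : W, (ν (p + (q : V))).toFun x

variable {ν' : V ⧸ W → DistFun}

lemma IsQuotientNorm.le_mkQ (hν' : IsQuotientNorm ν W ν') (v : V) : ν v ≤ ν' (W.mkQ v) :=
  fun x => by
    rw [hν']
    simpa using le_ciSup (f := fun q : W => (ν (v + q)).toFun x)
      ⟨1, by rintro _ ⟨q, rfl⟩; exact (ν _).le_one' x⟩ 0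

lemma IsQuotientNorm.exists_near_add (hν' : IsQuotientNorm ν W ν') {v : V} {t : ℝ}
    (hv : (ν' (W.mkQ v)).Near t) : ∃ q : W, (ν (v + q)).Near t := by
  unfold Near at hv
  rw [hν'] at hv
  exact exists_lt_of_lt_ciSup hv

lemma StrongCauchy.mkQ (hν' : IsQuotientNorm ν W ν') {p : ℕ → V} (hp : StrongCauchy ν p) :
    StrongCauchy ν' (fun n => W.mkQ (p n)) := fun t ht =>
  (hp t ht).imp fun _ hN m n hm hn => by
    rw [← map_sub]
    exact Near.of_le (hN m n hm hn) (hν'.le_mkQ _)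

lemma StrongConv.exists_lift_of_mkQ (hν' : IsQuotientNorm ν W ν') {p : ℕ → V} {x : V}
    (hx : StrongConv ν' (fun n => W.mkQ (p n)) (W.mkQ x)) :
    ∃ φ : ℕ → ℕ, Tendsto φ atTop atTop ∧
      ∃ q : ℕ → W, StrongConv ν (fun k => p (φ k) + q k) x := by
  choose N hN using fun k : ℕ => hx (1 / (k + 1)) Nat.one_div_pos_of_nat
  have hnear (k : ℕ) : (ν' (W.mkQ (p (max k (N k)) - x))).Near (1 / (k + 1)) := by
    rw [map_sub]
    exact hN k _ (le_max_right _ _)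
  choose q hq using fun k => hν'.exists_near_add (hnear k)
  refine ⟨fun k => max k (N k), tendsto_atTop_mono (fun k => le_max_left _ _) tendsto_id, q,
    fun t ht => ?_⟩
  obtain ⟨K, hK⟩ := exists_nat_one_div_lt ht
  refine ⟨K, fun k hk => ?_⟩
  rw [add_sub_right_comm]
  exact (hq k).mono ((Nat.one_div_le_one_div hk).trans hK.le)

end Submodule

theorem complete_of_subspace_and_quotient_complete_general {V : Type*} [AddCommGroup V] [Module ℝ V]
    (ν : V → DistFun) (τ τs : DistFun → DistFun → DistFun)
    (h : IsPNSpace ν τ τs)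
    (W : Submodule ℝ V)
    (ν' : V ⧸ W → DistFun)
    (hν' : ∀ (p : V) (x : ℝ),
      (ν' (W.mkQ p)).toFun x = ⨆ q : W, (ν (p + (q : V))).toFun x)
    (hWc : StrongComplete (fun w : W => ν (w : V)))
    (hQc : StrongComplete ν') :
    StrongComplete ν := by
  have hPPN := h.toIsPPNSpace
  intro p hp
  obtain ⟨x, hx⟩ : ∃ x, StrongConv ν' (fun n => W.mkQ (p n)) (W.mkQ x) := by
    obtain ⟨y, hy⟩ := hQc _ (hp.mkQ hν')
    obtain ⟨x, rfl⟩ := W.mkQ_surjective y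
    exact ⟨x, hy⟩
  obtain ⟨φ, hφ, q, hpq⟩ := hx.exists_lift_of_mkQ hν'
  have hq : StrongCauchy ν (fun k => (q k : V)) := by
    simpa using (hpq.strongCauchy hPPN).sub hPPN (hp.comp hφ)
  obtain ⟨w, hw⟩ := hWc q (strongCauchy_submodule_iff.2 hq)
  refine ⟨x - w, hp.strongConv_of_comp hPPN hφ ?_⟩
  simpa using hpq.sub hPPN (strongConv_submodule_iff.1 hw)

theorem complete_of_subspace_and_quotient_complete {V : Type*} [AddCommGroup V] [Module ℝ V]
    (ν : V → DistFun) (τ τs : DistFun → DistFun → DistFun)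
    (h : IsPNSpace ν τ τs) (hτ : SupCont τ) (hτs : SupCont τs)
    (W : Submodule ℝ V)
    (hW : StrongClosed ν (W : Set V))
    (ν' : V ⧸ W → DistFun)
    (hν' : ∀ (p : V) (x : ℝ),
      (ν' (W.mkQ p)).toFun x = ⨆ q : W, (ν (p + (q : V))).toFun x)
    (hWc : StrongComplete (fun w : W => ν (w : V)))
    (hQc : StrongComplete ν') :
    StrongComplete ν :=
  complete_of_subspace_and_quotient_complete_general ν τ τs h W ν' hν' hWc hQc
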